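/- For the standard normal distribution, both truncated variances are bounded by the untruncated variance: for every real $\zeta$, $1 - \frac{\zeta\phi(\zeta)}{\Phi(\zeta)} - \left(\frac{\phi(\zeta)}{\Phi(\zeta)}\right)^2 \le 1$ and $1 + \frac{\zeta\phi(\zeta)}{1-\Phi(\zeta)} - \left(\frac{\phi(\zeta)}{1-\Phi(\zeta)}\right)^2 \le 1$; equivalently, $\mathrm{Var}(X \mid X \le v) \le \sigma^2$ and $\mathrm{Var}(X \mid X \ge v) \le \sigma^2$ for $X \sim \mathcal{N}(\mu,\sigma^2)$. -/

import Mathlib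

open MeasureTheory ProbabilityTheory

/-- Standard normal density `φ`. -/
noncomputable def stdNormalPDF (z : ℝ) : ℝ :=
  Real.exp (-z ^ 2 / 2) / Real.sqrt (2 * Real.pi)

/-- Standard normal CDF `Φ`. -/
noncomputable def stdNormalCDF (z : ℝ) : ℝ :=
  ∫ t in Set.Iic z, stdNormalPDF t

/-!
Let `p` be the density of `N(m, v)` and `A = ∫_{x ≤ w} p`. Stein's identity `v p' = -(x - m) p`
and integration by parts give the truncated moments
`∫_{x ≤ w} (x - m) p = -v p(w)` and `∫_{x ≤ w} (x - m)² p = v A - v (w - m) p(w)`, hence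
`Var(X | X ≤ w) = v - v p(w) ((w - m) A + v p(w)) / A²`.
The Mills-type quantity `(w - m) A + v p(w)` equals `∫_{x ≤ w} (w - x) p(x) dx ≥ 0`, which gives
the bound; the upper tail is symmetric, and the first claim is the case `m = 0`, `v = 1`.
-/

open Set Real
open scoped NNReal

section HalfLineFTC

variable {E : Type*} [NormedAddCommGroup E] [NormedSpace ℝ E] [CompleteSpace E] {f f' : ℝ → E}

theorem integral_Iic_of_hasDerivAt_of_integrable (hderiv : ∀ x, HasDerivAt f (f' x) x)
    (hf : Integrable f) (hf' : Integrable f') (a : ℝ) : ∫ x in Iic a, f' x = f a := by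
  have hlim := tendsto_zero_of_hasDerivAt_of_integrableOn_Iic (a := a) (fun x _ ↦ hderiv x)
    hf'.integrableOn hf.integrableOn
  simpa using integral_Iic_of_hasDerivAt_of_tendsto (hderiv a).continuousAt.continuousWithinAt
    (fun x _ ↦ hderiv x) hf'.integrableOn hlim

theorem integral_Ioi_of_hasDerivAt_of_integrable (hderiv : ∀ x, HasDerivAt f (f' x) x)
    (hf : Integrable f) (hf' : Integrable f') (a : ℝ) : ∫ x in Ioi a, f' x = -f a := by
  have hlim := tendsto_zero_of_hasDerivAt_of_integrableOn_Ioi (a := a) (fun x _ ↦ hderiv x)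
    hf'.integrableOn hf.integrableOn
  simpa using integral_Ioi_of_hasDerivAt_of_tendsto (hderiv a).continuousAt.continuousWithinAt
    (fun x _ ↦ hderiv x) hf'.integrableOn hlim

end HalfLineFTC

theorem variance_cond_eq {Ω : Type*} [MeasurableSpace Ω] {μ : Measure Ω} [IsFiniteMeasure μ]
    {s : Set Ω} {X : Ω → ℝ} (hμs : μ s ≠ 0) (hX : MemLp X 2 μ) (c : ℝ) :
    Var[X; μ[|s]] = (∫ ω in s, (X ω - c) ^ 2 ∂μ) / μ.real s
      - ((∫ ω in s, (X ω - c) ∂μ) / μ.real s) ^ 2 := by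
  have := cond_isProbabilityMeasure hμs
  have hXs : MemLp X 2 (μ[|s]) := (hX.restrict s).smul_measure (ENNReal.inv_ne_top.2 hμs)
  rw [← variance_sub_const hXs.aestronglyMeasurable c,
    variance_eq_sub (show MemLp (fun ω ↦ X ω - c) 2 (μ[|s]) from hXs.sub (memLp_const c))]
  simp only [ProbabilityTheory.cond, integral_smul_measure, ENNReal.toReal_inv, measureReal_def,
    smul_eq_mul, Pi.pow_apply]
  ring

theorem mul_div_add_div_sq_nonneg {a b c : ℝ} (hc : 0 < c) (hb : 0 ≤ b) (h : 0 ≤ a * c + b) :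
    0 ≤ a * b / c + (b / c) ^ 2 := by
  have : a * b / c + (b / c) ^ 2 = b * (a * c + b) / c ^ 2 := by field_simp
  rw [this]
  exact div_nonneg (mul_nonneg hb h) (sq_nonneg c)

section Gaussian

variable {m : ℝ} {v : ℝ≥0}

theorem integrable_sub_pow_mul_gaussianPDFReal (hv : v ≠ 0) (k : ℕ) :
    Integrable fun x ↦ (x - m) ^ k * gaussianPDFReal m v x := by
  have hb : 0 < (2 * (v : ℝ))⁻¹ := by positivity
  have hk : -1 < (k : ℝ) := by linarith [k.cast_nonneg (α := ℝ)]
  refine (((integrable_rpow_mul_exp_neg_mul_sq hb hk).comp_sub_right m).const_mul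
    (√(2 * π * v))⁻¹).congr (ae_of_all _ fun x ↦ ?_)
  simp only [gaussianPDFReal, rpow_natCast]
  ring_nf

theorem integrable_sub_mul_gaussianPDFReal (hv : v ≠ 0) :
    Integrable fun x ↦ (x - m) * gaussianPDFReal m v x := by
  simpa using integrable_sub_pow_mul_gaussianPDFReal (m := m) hv 1

theorem integrable_sub_sq_sub_mul_gaussianPDFReal (hv : v ≠ 0) :
    Integrable fun x ↦ ((x - m) ^ 2 - v) * gaussianPDFReal m v x := by
  simp_rw [sub_mul]
  exact (integrable_sub_pow_mul_gaussianPDFReal hv 2).sub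
    ((integrable_gaussianPDFReal m v).const_mul _)

theorem hasDerivAt_gaussianPDFReal (hv : v ≠ 0) (x : ℝ) :
    HasDerivAt (gaussianPDFReal m v) (-(x - m) / v * gaussianPDFReal m v x) x := by
  have hexp : HasDerivAt (fun y ↦ -(y - m) ^ 2 / (2 * v)) (-(x - m) / v) x := by
    refine ((((hasDerivAt_id x).sub_const m).pow 2).neg.div_const (2 * (v : ℝ))).congr_deriv ?_
    have : (v : ℝ) ≠ 0 := by exact_mod_cast hv
    simp only [id]
    field_simp
    ring
  rw [gaussianPDFReal_def]
  refine (hexp.exp.const_mul _).congr_deriv ?_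
  ring

theorem hasDerivAt_neg_mul_gaussianPDFReal (hv : v ≠ 0) (x : ℝ) :
    HasDerivAt (fun y ↦ -(v * gaussianPDFReal m v y)) ((x - m) * gaussianPDFReal m v x) x := by
  refine ((hasDerivAt_gaussianPDFReal hv x).const_mul (v : ℝ)).neg.congr_deriv ?_
  have : (v : ℝ) ≠ 0 := by exact_mod_cast hv
  field_simp

theorem hasDerivAt_neg_mul_sub_mul_gaussianPDFReal (hv : v ≠ 0) (x : ℝ) :
    HasDerivAt (fun y ↦ -(v * ((y - m) * gaussianPDFReal m v y)))
      (((x - m) ^ 2 - v) * gaussianPDFReal m v x) x := by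
  have := ((hasDerivAt_id x).sub_const m).fun_mul
    (hasDerivAt_neg_mul_gaussianPDFReal (m := m) hv x)
  simp only [id, mul_neg, mul_left_comm _ (v : ℝ)] at this
  refine this.congr_deriv ?_
  ring

theorem integral_Iic_sub_mul_gaussianPDFReal (hv : v ≠ 0) (w : ℝ) :
    ∫ x in Iic w, (x - m) * gaussianPDFReal m v x = -(v * gaussianPDFReal m v w) :=
  integral_Iic_of_hasDerivAt_of_integrable (hasDerivAt_neg_mul_gaussianPDFReal hv)
    ((integrable_gaussianPDFReal m v).const_mul _).neg (integrable_sub_mul_gaussianPDFReal hv) w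

theorem integral_Ioi_sub_mul_gaussianPDFReal (hv : v ≠ 0) (w : ℝ) :
    ∫ x in Ioi w, (x - m) * gaussianPDFReal m v x = v * gaussianPDFReal m v w := by
  rw [integral_Ioi_of_hasDerivAt_of_integrable (hasDerivAt_neg_mul_gaussianPDFReal hv)
    ((integrable_gaussianPDFReal m v).const_mul _).neg (integrable_sub_mul_gaussianPDFReal hv) w,
    neg_neg]

theorem integral_Iic_sub_sq_mul_gaussianPDFReal (hv : v ≠ 0) (w : ℝ) :
    ∫ x in Iic w, (x - m) ^ 2 * gaussianPDFReal m v x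
      = v * (∫ x in Iic w, gaussianPDFReal m v x) - v * ((w - m) * gaussianPDFReal m v w) := by
  have h := integral_Iic_of_hasDerivAt_of_integrable
    (hasDerivAt_neg_mul_sub_mul_gaussianPDFReal (m := m) hv)
    ((integrable_sub_mul_gaussianPDFReal hv).const_mul _).neg
    (integrable_sub_sq_sub_mul_gaussianPDFReal hv) w
  simp_rw [sub_mul] at h
  rw [integral_sub (integrable_sub_pow_mul_gaussianPDFReal hv 2).integrableOn
    ((integrable_gaussianPDFReal m v).const_mul _).integrableOn, integral_const_mul] at h
  linear_combination h

theorem integral_Ioi_sub_sq_mul_gaussianPDFReal (hv : v ≠ 0) (w : ℝ) :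
    ∫ x in Ioi w, (x - m) ^ 2 * gaussianPDFReal m v x
      = v * (∫ x in Ioi w, gaussianPDFReal m v x) + v * ((w - m) * gaussianPDFReal m v w) := by
  have h := integral_Ioi_of_hasDerivAt_of_integrable
    (hasDerivAt_neg_mul_sub_mul_gaussianPDFReal (m := m) hv)
    ((integrable_sub_mul_gaussianPDFReal hv).const_mul _).neg
    (integrable_sub_sq_sub_mul_gaussianPDFReal hv) w
  simp_rw [sub_mul] at h
  rw [integral_sub (integrable_sub_pow_mul_gaussianPDFReal hv 2).integrableOn
    ((integrable_gaussianPDFReal m v).const_mul _).integrableOn, integral_const_mul] at h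
  linear_combination h

theorem integral_Ioi_gaussianPDFReal (hv : v ≠ 0) (w : ℝ) :
    ∫ x in Ioi w, gaussianPDFReal m v x = 1 - ∫ x in Iic w, gaussianPDFReal m v x := by
  rw [← integral_gaussianPDFReal_eq_one m hv, ← intervalIntegral.integral_Iic_add_Ioi
    (integrable_gaussianPDFReal m v).integrableOn (integrable_gaussianPDFReal m v).integrableOn]
  ring

theorem setIntegral_gaussianPDFReal_pos (hv : v ≠ 0) {s : Set ℝ} (hs : volume s ≠ 0) :
    0 < ∫ x in s, gaussianPDFReal m v x := by
  rw [setIntegral_pos_iff_support_of_nonneg_ae (ae_of_all _ (gaussianPDFReal_nonneg m v))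
    (integrable_gaussianPDFReal m v).integrableOn]
  have : Function.support (gaussianPDFReal m v) = univ :=
    eq_univ_of_forall fun x ↦ (gaussianPDFReal_pos m v x hv).ne'
  rwa [this, univ_inter, pos_iff_ne_zero]

theorem mills_inequality_Iic (hv : v ≠ 0) (w : ℝ) :
    0 ≤ (w - m) * (∫ x in Iic w, gaussianPDFReal m v x) + v * gaussianPDFReal m v w := by
  have : ∫ x in Iic w, (w - x) * gaussianPDFReal m v x
      = (w - m) * (∫ x in Iic w, gaussianPDFReal m v x) + v * gaussianPDFReal m v w := by
    simp_rw [show ∀ x, (w - x) * gaussianPDFReal m v x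
      = (w - m) * gaussianPDFReal m v x - (x - m) * gaussianPDFReal m v x from fun x ↦ by ring]
    rw [integral_sub ((integrable_gaussianPDFReal m v).const_mul _).integrableOn
      (integrable_sub_mul_gaussianPDFReal hv).integrableOn,
      integral_const_mul, integral_Iic_sub_mul_gaussianPDFReal hv, sub_neg_eq_add]
  rw [← this]
  exact setIntegral_nonneg measurableSet_Iic fun x hx ↦
    mul_nonneg (sub_nonneg.2 hx) (gaussianPDFReal_nonneg m v x)

theorem mills_inequality_Ioi (hv : v ≠ 0) (w : ℝ) :
    0 ≤ (m - w) * (∫ x in Ioi w, gaussianPDFReal m v x) + v * gaussianPDFReal m v w := by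
  have : ∫ x in Ioi w, (x - w) * gaussianPDFReal m v x
      = (m - w) * (∫ x in Ioi w, gaussianPDFReal m v x) + v * gaussianPDFReal m v w := by
    simp_rw [show ∀ x, (x - w) * gaussianPDFReal m v x
      = (x - m) * gaussianPDFReal m v x - (w - m) * gaussianPDFReal m v x from fun x ↦ by ring]
    rw [integral_sub (integrable_sub_mul_gaussianPDFReal hv).integrableOn
      ((integrable_gaussianPDFReal m v).const_mul _).integrableOn,
      integral_const_mul, integral_Ioi_sub_mul_gaussianPDFReal hv]
    ring
  rw [← this]
  exact setIntegral_nonneg measurableSet_Ioi fun x hx ↦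
    mul_nonneg (sub_nonneg.2 hx.le) (gaussianPDFReal_nonneg m v x)

theorem setIntegral_gaussianReal_eq (hv : v ≠ 0) {s : Set ℝ} (hs : MeasurableSet s)
    (f : ℝ → ℝ) : ∫ x in s, f x ∂gaussianReal m v = ∫ x in s, f x * gaussianPDFReal m v x := by
  rw [← integral_indicator hs, ← integral_indicator hs, integral_gaussianReal_eq_integral_smul hv]
  congr with x
  by_cases hx : x ∈ s <;> simp [hx, mul_comm]

theorem measureReal_gaussianReal (hv : v ≠ 0) (s : Set ℝ) :
    (gaussianReal m v).real s = ∫ x in s, gaussianPDFReal m v x := by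
  rw [measureReal_def, gaussianReal_apply_eq_integral m hv,
    ENNReal.toReal_ofReal (integral_nonneg (gaussianPDFReal_nonneg m v))]

theorem gaussianReal_apply_ne_zero (hv : v ≠ 0) {s : Set ℝ} (hs : volume s ≠ 0) :
    gaussianReal m v s ≠ 0 :=
  fun h ↦ hs (gaussianReal_absolutelyContinuous' m hv h)

theorem variance_cond_Iic_gaussianReal_le (hv : v ≠ 0) (w : ℝ) :
    Var[id; (gaussianReal m v)[|Iic w]] ≤ v := by
  rw [variance_cond_eq (gaussianReal_apply_ne_zero hv (by simp)) (memLp_id_gaussianReal 2) m,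
    measureReal_gaussianReal hv]
  simp only [id, setIntegral_gaussianReal_eq hv measurableSet_Iic,
    integral_Iic_sub_sq_mul_gaussianPDFReal hv, integral_Iic_sub_mul_gaussianPDFReal hv]
  have hA : 0 < ∫ x in Iic w, gaussianPDFReal m v x := setIntegral_gaussianPDFReal_pos hv (by simp)
  have hmills := mul_div_add_div_sq_nonneg hA
    (mul_nonneg v.coe_nonneg (gaussianPDFReal_nonneg m v w)) (mills_inequality_Iic hv w)
  set A := ∫ x in Iic w, gaussianPDFReal m v x
  set p := gaussianPDFReal m v w
  have : (v * A - v * ((w - m) * p)) / A - (-(v * p) / A) ^ 2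
      = v - ((w - m) * (v * p) / A + (v * p / A) ^ 2) := by
    field_simp
    ring
  linarith

theorem variance_cond_Ici_gaussianReal_le (hv : v ≠ 0) (w : ℝ) :
    Var[id; (gaussianReal m v)[|Ici w]] ≤ v := by
  rw [variance_cond_eq (gaussianReal_apply_ne_zero hv (by simp)) (memLp_id_gaussianReal 2) m,
    measureReal_gaussianReal hv]
  simp only [id, setIntegral_gaussianReal_eq hv measurableSet_Ici, integral_Ici_eq_integral_Ioi,
    integral_Ioi_sub_sq_mul_gaussianPDFReal hv, integral_Ioi_sub_mul_gaussianPDFReal hv]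
  have hA : 0 < ∫ x in Ioi w, gaussianPDFReal m v x := setIntegral_gaussianPDFReal_pos hv (by simp)
  have hmills := mul_div_add_div_sq_nonneg hA
    (mul_nonneg v.coe_nonneg (gaussianPDFReal_nonneg m v w)) (mills_inequality_Ioi hv w)
  set A := ∫ x in Ioi w, gaussianPDFReal m v x
  set p := gaussianPDFReal m v w
  have : (v * A + v * ((w - m) * p)) / A - (v * p / A) ^ 2
      = v - ((m - w) * (v * p) / A + (v * p / A) ^ 2) := by
    field_simp
    ring
  linarith

end Gaussian

theorem stdNormalPDF_eq_gaussianPDFReal : stdNormalPDF = gaussianPDFReal 0 1 := by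
  ext z
  simp [stdNormalPDF, gaussianPDFReal, div_eq_inv_mul]

theorem stdNormalCDF_eq_integral (z : ℝ) :
    stdNormalCDF z = ∫ x in Iic z, gaussianPDFReal 0 1 x := by
  rw [stdNormalCDF, stdNormalPDF_eq_gaussianPDFReal]

/-- Both truncated variances are bounded by the untruncated
variance: for every real `ζ`,
`1 - ζφ(ζ)/Φ(ζ) - (φ(ζ)/Φ(ζ))² ≤ 1` and
`1 + ζφ(ζ)/(1-Φ(ζ)) - (φ(ζ)/(1-Φ(ζ)))² ≤ 1`;
equivalently, `Var(X | X ≤ v) ≤ σ²` and `Var(X | X ≥ v) ≤ σ²` for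
`X ~ N(μ, σ²)`. -/
theorem truncated_gaussian_variance_le :
    (∀ ζ : ℝ,
      1 - ζ * stdNormalPDF ζ / stdNormalCDF ζ
          - (stdNormalPDF ζ / stdNormalCDF ζ) ^ 2 ≤ 1 ∧
      1 + ζ * stdNormalPDF ζ / (1 - stdNormalCDF ζ)
          - (stdNormalPDF ζ / (1 - stdNormalCDF ζ)) ^ 2 ≤ 1) ∧
    (∀ μ σ v : ℝ, 0 < σ →
      variance id ((gaussianReal μ (⟨σ ^ 2, sq_nonneg σ⟩ : NNReal))[|Set.Iic v])
          ≤ σ ^ 2 ∧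
      variance id ((gaussianReal μ (⟨σ ^ 2, sq_nonneg σ⟩ : NNReal))[|Set.Ici v])
          ≤ σ ^ 2) := by
  have h1 : (1 : ℝ≥0) ≠ 0 := one_ne_zero
  refine ⟨fun ζ ↦ ⟨?_, ?_⟩, fun μ σ w hσ ↦ ?_⟩
  · rw [stdNormalCDF_eq_integral, stdNormalPDF_eq_gaussianPDFReal]
    have := mul_div_add_div_sq_nonneg (setIntegral_gaussianPDFReal_pos h1 (s := Iic ζ) (by simp))
      (gaussianPDFReal_nonneg 0 1 ζ) (by simpa using mills_inequality_Iic (m := 0) h1 ζ)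
    linarith
  · rw [stdNormalCDF_eq_integral, ← integral_Ioi_gaussianPDFReal h1,
      stdNormalPDF_eq_gaussianPDFReal]
    have := mul_div_add_div_sq_nonneg (a := -ζ)
      (setIntegral_gaussianPDFReal_pos h1 (s := Ioi ζ) (by simp))
      (gaussianPDFReal_nonneg 0 1 ζ) (by simpa using mills_inequality_Ioi (m := 0) h1 ζ)
    rw [neg_mul, neg_div] at this
    linarith
  · have hv : (⟨σ ^ 2, sq_nonneg σ⟩ : ℝ≥0) ≠ 0 := NNReal.coe_ne_zero.mp (pow_pos hσ 2).ne'
    exact ⟨variance_cond_Iic_gaussianReal_le hv w, variance_cond_Ici_gaussianReal_le hv w⟩
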